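/- For every sample size n ≥ 1 and all data y_1 < … < y_n, the MDI prior for the GEV distribution, corresponding to π(ξ) = e^{−γ(1+ξ)} for ξ ∈ ℝ (γ the Euler–Mascheroni constant), yields an improper posterior: the GEV posterior normalizing constant K_n(e^{−γ(1+ξ)}; y) = +∞. -/

import Mathlib

open MeasureTheory Real Set
open scoped ENNReal Classical

/-- The GEV posterior integrand for data `y`, at parameters `(μ, σ, ξ)`:
`σ^{-(n+1)} ∏_i (1 + ξ(y_i - μ)/σ)^{-(1+1/ξ)} exp(-Σ_i (1 + ξ(y_i - μ)/σ)^{-1/ξ})`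
on the set where `1 + ξ(y_i - μ)/σ > 0` for all `i` (and `0` otherwise), with
the Gumbel interpretation
`σ^{-(n+1)} exp(-Σ_i (y_i - μ)/σ) exp(-Σ_i exp(-(y_i - μ)/σ))` when `ξ = 0`. -/
noncomputable def gevDens (n : ℕ) (y : Fin n → ℝ) (μ σ ξ : ℝ) : ℝ :=
  if ξ = 0 then
    σ ^ (-((n : ℝ) + 1)) * Real.exp (-∑ i, (y i - μ) / σ) *
      Real.exp (-∑ i, Real.exp (-((y i - μ) / σ)))
  else if ∀ i, 0 < 1 + ξ * (y i - μ) / σ then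
    σ ^ (-((n : ℝ) + 1)) * (∏ i, (1 + ξ * (y i - μ) / σ) ^ (-(1 + 1 / ξ))) *
      Real.exp (-∑ i, (1 + ξ * (y i - μ) / σ) ^ (-1 / ξ))
  else 0

/-- The GEV posterior normalizing constant `K_n(π; y)` arising from a
GEV(μ, σ, ξ) likelihood for `y_1, …, y_n` and the prior `π(μ,σ,ξ) ∝ π(ξ)/σ`. -/
noncomputable def gevK (n : ℕ) (y : Fin n → ℝ) (p : ℝ → ℝ) : ℝ≥0∞ :=
  ∫⁻ ξ : ℝ, ENNReal.ofReal (p ξ) *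
    ∫⁻ μ : ℝ, ∫⁻ σ in Set.Ioi (0 : ℝ), ENNReal.ofReal (gevDens n y μ σ ξ)

/-! For `ξ = -a ≤ -1`, take `μ` just above the data and `σ ∈ [aL, 2aL]`, where `L` bounds every
`μ - y_i`: then each `1 + ξ (y_i - μ)/σ` lies in `[1, 2]`, where the density is at least a constant
times `σ^{-(n+1)}`. Hence the `(μ, σ)`-marginal at shape `-a` is at least a constant times `a^{-n}`.
The MDI weight `e^{-γ(1+ξ)} = e^{-γ} e^{γa}` outgrows `a^n`, so the integrand in `ξ` is bounded
below by a positive constant on `(-∞, -1]` and `K_n` is infinite. -/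

lemma mul_measure_le_lintegral_of_le {α : Type*} [MeasurableSpace α] {μ : Measure α}
    {f : α → ℝ≥0∞} {s : Set α} {c : ℝ≥0∞} (hs : MeasurableSet s) (h : ∀ x ∈ s, c ≤ f x) :
    c * μ s ≤ ∫⁻ x, f x ∂μ :=
  calc c * μ s = ∫⁻ _ in s, c ∂μ := (setLIntegral_const s c).symm
    _ ≤ ∫⁻ x in s, f x ∂μ := setLIntegral_mono' hs h
    _ ≤ ∫⁻ x, f x ∂μ := setLIntegral_le_lintegral s f

lemma lintegral_eq_top_of_measure_eq_top_of_le {α : Type*} [MeasurableSpace α] {μ : Measure α}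
    {f : α → ℝ≥0∞} {s : Set α} {c : ℝ≥0∞} (hs : MeasurableSet s) (hμs : μ s = ⊤)
    (hc : c ≠ 0) (h : ∀ x ∈ s, c ≤ f x) : ∫⁻ x, f x ∂μ = ⊤ :=
  top_unique <| (mul_measure_le_lintegral_of_le hs h).trans' (by rw [hμs, ENNReal.mul_top hc])

lemma pow_div_factorial_le_exp_mul_div_pow {γ a : ℝ} (hγ : 0 ≤ γ) (ha : 0 < a) (n : ℕ) :
    γ ^ n / n.factorial ≤ exp (γ * a) / a ^ n := by
  have h := pow_div_factorial_le_exp _ (mul_nonneg hγ ha.le) n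
  rw [le_div_iff₀ (by positivity)]
  calc γ ^ n / n.factorial * a ^ n = (γ * a) ^ n / n.factorial := by ring
    _ ≤ exp (γ * a) := h

noncomputable def gevMarginal (n : ℕ) (y : Fin n → ℝ) (ξ : ℝ) : ℝ≥0∞ :=
  ∫⁻ μ : ℝ, ∫⁻ σ in Ioi (0 : ℝ), ENNReal.ofReal (gevDens n y μ σ ξ)

section

variable {n : ℕ} {y : Fin n → ℝ}

lemma le_gevDens {μ σ ξ : ℝ} (hξ : ξ ≤ -1) (hσ : 0 < σ)
    (ht : ∀ i, ξ * (y i - μ) / σ ∈ Icc (0 : ℝ) 1) :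
    (1 / 2) ^ n * exp (-(2 * n)) / σ ^ (n + 1) ≤ gevDens n y μ σ ξ := by
  have ht1 : ∀ i, 1 ≤ 1 + ξ * (y i - μ) / σ := fun i => by linarith [(ht i).1]
  have ht2 : ∀ i, 1 + ξ * (y i - μ) / σ ≤ 2 := fun i => by linarith [(ht i).2]
  have hprod : (1 / 2 : ℝ) ^ n ≤ ∏ i, (1 + ξ * (y i - μ) / σ) ^ (-(1 + 1 / ξ)) := by
    have hinv : 1 / ξ ≤ 0 := div_nonpos_of_nonneg_of_nonpos zero_le_one (by linarith)
    calc (1 / 2 : ℝ) ^ n = ∏ _i : Fin n, (1 / 2 : ℝ) := by simp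
      _ ≤ _ := Finset.prod_le_prod (fun _ _ => by norm_num) fun i _ => calc
          (1 / 2 : ℝ) ≤ (1 + ξ * (y i - μ) / σ)⁻¹ := by
            rw [one_div]; exact inv_anti₀ (by linarith [ht1 i]) (ht2 i)
          _ = (1 + ξ * (y i - μ) / σ) ^ (-1 : ℝ) := (rpow_neg_one _).symm
          _ ≤ _ := rpow_le_rpow_of_exponent_le (ht1 i) (by linarith)
  have hsum : ∑ i, (1 + ξ * (y i - μ) / σ) ^ (-1 / ξ) ≤ 2 * n := by
    have hexp : -1 / ξ ≤ 1 := by rw [div_le_iff_of_neg (by linarith)]; linarith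
    calc ∑ i, (1 + ξ * (y i - μ) / σ) ^ (-1 / ξ) ≤ Finset.univ.card • (2 : ℝ) :=
          Finset.sum_le_card_nsmul _ _ _ fun i _ => calc
            _ ≤ (1 + ξ * (y i - μ) / σ) ^ (1 : ℝ) := rpow_le_rpow_of_exponent_le (ht1 i) hexp
            _ ≤ 2 := by rw [rpow_one]; exact ht2 i
      _ = 2 * n := by simp [mul_comm]
  have hpow : σ ^ (-((n : ℝ) + 1)) = (σ ^ (n + 1))⁻¹ := by
    rw [rpow_neg hσ.le, ← rpow_natCast]; push_cast; rfl
  rw [gevDens, if_neg (by linarith), if_pos fun i => by linarith [ht1 i], hpow]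
  calc (1 / 2) ^ n * exp (-(2 * n)) / σ ^ (n + 1)
      = (σ ^ (n + 1))⁻¹ * (1 / 2) ^ n * exp (-(2 * n)) := by ring
    _ ≤ _ := by
      gcongr
      exact mul_nonneg (by positivity)
        (Finset.prod_nonneg fun i _ => rpow_nonneg (by linarith [ht1 i]) _)

lemma le_setLIntegral_Ioi_gevDens {a L μ : ℝ} (ha : 1 ≤ a) (hL : 0 < L)
    (hμ : ∀ i, y i ≤ μ ∧ μ - y i ≤ L) :
    ENNReal.ofReal ((1 / 2) ^ n * exp (-(2 * n)) / (2 * (a * L)) ^ (n + 1) * (a * L)) ≤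
      ∫⁻ σ in Ioi 0, ENNReal.ofReal (gevDens n y μ σ (-a)) := by
  have haL : 0 < a * L := by positivity
  have hsub : Icc (a * L) (2 * (a * L)) ⊆ Ioi 0 := fun σ hσ => haL.trans_le hσ.1
  calc ENNReal.ofReal ((1 / 2) ^ n * exp (-(2 * n)) / (2 * (a * L)) ^ (n + 1) * (a * L))
      = ENNReal.ofReal ((1 / 2) ^ n * exp (-(2 * n)) / (2 * (a * L)) ^ (n + 1)) *
          volume.restrict (Ioi 0) (Icc (a * L) (2 * (a * L))) := by
        rw [Measure.restrict_eq_self _ hsub, Real.volume_Icc, ← ENNReal.ofReal_mul (by positivity)]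
        congr 1
        ring
    _ ≤ _ := by
      refine mul_measure_le_lintegral_of_le measurableSet_Icc fun σ hσ => ?_
      have hσ0 : 0 < σ := haL.trans_le hσ.1
      have ht : ∀ i, -a * (y i - μ) / σ ∈ Icc (0 : ℝ) 1 := fun i => by
        have hle : a * (μ - y i) ≤ σ := calc
          a * (μ - y i) ≤ a * L := mul_le_mul_of_nonneg_left (hμ i).2 (by linarith)
          _ ≤ σ := hσ.1
        rw [show -a * (y i - μ) = a * (μ - y i) by ring]
        exact ⟨div_nonneg (mul_nonneg (by linarith) (by linarith [(hμ i).1])) hσ0.le,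
          (div_le_one hσ0).2 hle⟩
      refine ENNReal.ofReal_le_ofReal ((div_le_div_of_nonneg_left (by positivity) (by positivity)
        (pow_le_pow_left₀ hσ0.le hσ.2 _)).trans (le_gevDens (by linarith) hσ0 ht))

end

lemma exists_pos_le_gevMarginal (n : ℕ) (y : Fin n → ℝ) :
    ∃ κ > 0, ∀ a ≥ 1, ENNReal.ofReal (κ / a ^ n) ≤ gevMarginal n y (-a) := by
  set R := ∑ i, |y i|
  have hR : ∀ i, |y i| ≤ R := fun i =>
    Finset.single_le_sum (fun j _ => abs_nonneg (y j)) (Finset.mem_univ i)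
  have hR0 : 0 ≤ R := Finset.sum_nonneg fun i _ => abs_nonneg _
  set L := 2 * R + 1
  refine ⟨(1 / 2) ^ n * exp (-(2 * n)) / (2 ^ (n + 1) * L ^ n), by positivity, fun a ha => ?_⟩
  calc ENNReal.ofReal ((1 / 2) ^ n * exp (-(2 * n)) / (2 ^ (n + 1) * L ^ n) / a ^ n)
      = ENNReal.ofReal ((1 / 2) ^ n * exp (-(2 * n)) / (2 * (a * L)) ^ (n + 1) * (a * L)) *
          volume (Icc R (R + 1)) := by
        rw [Real.volume_Icc, add_sub_cancel_left, ENNReal.ofReal_one, mul_one]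
        congr 1
        have : 0 < a := by linarith
        have : 0 < L := by positivity
        rw [mul_pow, mul_pow, pow_succ, pow_succ a, pow_succ L]
        field_simp
    _ ≤ gevMarginal n y (-a) :=
      mul_measure_le_lintegral_of_le measurableSet_Icc fun μ hμ =>
        le_setLIntegral_Ioi_gevDens ha (by positivity) fun i =>
          ⟨(le_abs_self _).trans ((hR i).trans hμ.1), by linarith [neg_abs_le (y i), hR i, hμ.2]⟩

theorem gev_MDI_improper (n : ℕ) (y : Fin n → ℝ) :
    gevK n y (fun ξ => Real.exp (-(Real.eulerMascheroniConstant * (1 + ξ)))) = ⊤ := by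
  set γ := Real.eulerMascheroniConstant
  have hγ : 0 < γ := lt_trans (by norm_num) one_half_lt_eulerMascheroniConstant
  obtain ⟨κ, hκ, hmarg⟩ := exists_pos_le_gevMarginal n y
  refine lintegral_eq_top_of_measure_eq_top_of_le (s := Iic (-1))
    (c := ENNReal.ofReal (exp (-γ) * (γ ^ n / n.factorial * κ)))
    measurableSet_Iic (by rw [Real.volume_Iic]) (ENNReal.ofReal_pos.2 (by positivity)).ne'
    fun ξ hξ => ?_
  obtain ⟨a, ha, rfl⟩ : ∃ a ≥ 1, ξ = -a := ⟨-ξ, by linarith [mem_Iic.1 hξ], by ring⟩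
  have hexp := pow_div_factorial_le_exp_mul_div_pow hγ.le (by linarith : 0 < a) n
  calc ENNReal.ofReal (exp (-γ) * (γ ^ n / n.factorial * κ))
      ≤ ENNReal.ofReal (exp (-(γ * (1 + -a))) * (κ / a ^ n)) := by
        refine ENNReal.ofReal_le_ofReal ?_
        rw [show -(γ * (1 + -a)) = -γ + γ * a by ring, exp_add]
        calc exp (-γ) * (γ ^ n / n.factorial * κ) ≤ exp (-γ) * (exp (γ * a) / a ^ n * κ) := by
              gcongr
          _ = exp (-γ) * exp (γ * a) * (κ / a ^ n) := by ring
    _ = ENNReal.ofReal (exp (-(γ * (1 + -a)))) * ENNReal.ofReal (κ / a ^ n) :=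
        ENNReal.ofReal_mul (exp_nonneg _)
    _ ≤ _ := by gcongr; exact hmarg a ha
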